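/- For the two-site chain, the matrix p := Sᶻ - (7/6)Σᶻ + (1/24)Λᶻ commutes with both Σ⁺ and Σ⁻. -/

import Mathlib

open Matrix
open scoped Kronecker

noncomputable section

/-- Spin-1 raising operator. -/
def sp : Matrix (Fin 3) (Fin 3) ℂ := !![0,1,0; 0,0,1; 0,0,0]
/-- Spin-1 lowering operator. -/
def sm : Matrix (Fin 3) (Fin 3) ℂ := !![0,0,0; 1,0,0; 0,1,0]
/-- Spin-1 z-component. -/
def sz : Matrix (Fin 3) (Fin 3) ℂ := !![1,0,0; 0,0,0; 0,0,-1]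

/-- Standard basis vectors of ℂ³. -/
def u : Fin 3 → ℂ := ![1,0,0]
def f : Fin 3 → ℂ := ![0,1,0]
def d : Fin 3 → ℂ := ![0,0,1]

/-- Tensor product of two vectors of ℂ³. -/
def tp (a b : Fin 3 → ℂ) : Fin 3 × Fin 3 → ℂ := fun p => a p.1 * b p.2

/-- Rank-one projector U. -/
def U : Matrix (Fin 3 × Fin 3) (Fin 3 × Fin 3) ℂ :=
  (1/2 : ℂ) • vecMulVec (tp u f - tp f u) (tp u f - tp f u)
/-- Rank-one projector D. -/
def D : Matrix (Fin 3 × Fin 3) (Fin 3 × Fin 3) ℂ :=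
  (1/2 : ℂ) • vecMulVec (tp d f - tp f d) (tp d f - tp f d)
/-- Rank-one projector F. -/
def F : Matrix (Fin 3 × Fin 3) (Fin 3 × Fin 3) ℂ :=
  (1/2 : ℂ) • vecMulVec (tp u d - tp f f) (tp u d - tp f f)

/-- The Motzkin projector Π = U + D + F. -/
def Proj : Matrix (Fin 3 × Fin 3) (Fin 3 × Fin 3) ℂ := U + D + F

/-- The swap (permutation) operator on ℂ³ ⊗ ℂ³. -/
def P : Matrix (Fin 3 × Fin 3) (Fin 3 × Fin 3) ℂ :=
  fun p q => if p.1 = q.2 ∧ p.2 = q.1 then 1 else 0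

/-- The raising operator Σ⁺ for the two-site chain. -/
def Sig : Matrix (Fin 3 × Fin 3) (Fin 3 × Fin 3) ℂ :=
  sp ⊗ₖ (1 : Matrix (Fin 3) (Fin 3) ℂ) + (1 : Matrix (Fin 3) (Fin 3) ℂ) ⊗ₖ sp
    + (sp ^ 2) ⊗ₖ sm + sm ⊗ₖ (sp ^ 2)

/-- Σ⁻ = (Σ⁺)ᵀ. -/
def SigM : Matrix (Fin 3 × Fin 3) (Fin 3 × Fin 3) ℂ := Sig.transpose

/-- Σᶻ = [Σ⁺, Σ⁻]. -/
def SigZ : Matrix (Fin 3 × Fin 3) (Fin 3 × Fin 3) ℂ := Sig * SigM - SigM * Sig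

/-- Λ⁺ = [Σᶻ, Σ⁺]. -/
def LamP : Matrix (Fin 3 × Fin 3) (Fin 3 × Fin 3) ℂ := SigZ * Sig - Sig * SigZ

/-- Λ⁻ = -[Σᶻ, Σ⁻]. -/
def LamM : Matrix (Fin 3 × Fin 3) (Fin 3 × Fin 3) ℂ := -(SigZ * SigM - SigM * SigZ)

/-- Λᶻ = [Λ⁺, Λ⁻]. -/
def LamZ : Matrix (Fin 3 × Fin 3) (Fin 3 × Fin 3) ℂ := LamP * LamM - LamM * LamP

/-- Sᶻ = sᶻ ⊗ I + I ⊗ sᶻ. -/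
def Sz : Matrix (Fin 3 × Fin 3) (Fin 3 × Fin 3) ℂ :=
  sz ⊗ₖ (1 : Matrix (Fin 3) (Fin 3) ℂ) + (1 : Matrix (Fin 3) (Fin 3) ℂ) ⊗ₖ sz

/-- The central element p = Sᶻ - (7/6)Σᶻ + (1/24)Λᶻ. -/
def pC : Matrix (Fin 3 × Fin 3) (Fin 3 × Fin 3) ℂ :=
  Sz - (7/6 : ℂ) • SigZ + (1/24 : ℂ) • LamZ

/-! Every operator in sight is defined over any commutative ring, and `24 p` has integer entries,
so `[24 p, Σ⁺] = 0` is a finite computation over `ℤ`, which maps to any ring along `ℤ → R`.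
Since `Σᶻ = [Σ⁺, (Σ⁺)ᵀ]`, `Λ⁻ = (Λ⁺)ᵀ` and `Λᶻ = [Λ⁺, (Λ⁺)ᵀ]`, the element `p` is symmetric,
so transposing `[p, Σ⁺] = 0` gives `[p, Σ⁻] = 0`. -/

theorem Matrix.map_kronecker {R S F l m n p : Type*} [Mul R] [Mul S] [FunLike F R S]
    [MulHomClass F R S] (φ : F)
    (A : Matrix l m R) (B : Matrix n p R) : (A ⊗ₖ B).map φ = A.map φ ⊗ₖ B.map φ := by
  ext; simp

theorem Matrix.transpose_commutator_transpose_self {R n : Type*} [CommRing R] [Fintype n]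
    (A : Matrix n n R) : (A * Aᵀ - Aᵀ * A)ᵀ = A * Aᵀ - Aᵀ * A := by
  simp [transpose_sub, transpose_mul]

theorem Commute.transpose {R n : Type*} [CommSemiring R] [Fintype n] {A B : Matrix n n R}
    (h : Commute A B) : Commute Aᵀ Bᵀ := by
  rw [Commute, SemiconjBy, ← transpose_mul, ← transpose_mul, h.eq]

namespace TwoSite

variable (R : Type*) [CommRing R]

def spinRaise : Matrix (Fin 3) (Fin 3) R := !![0,1,0; 0,0,1; 0,0,0]
def spinLower : Matrix (Fin 3) (Fin 3) R := !![0,0,0; 1,0,0; 0,1,0]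
def spinZ : Matrix (Fin 3) (Fin 3) R := !![1,0,0; 0,0,0; 0,0,-1]

def sigmaPlus : Matrix (Fin 3 × Fin 3) (Fin 3 × Fin 3) R :=
  spinRaise R ⊗ₖ (1 : Matrix (Fin 3) (Fin 3) R) + (1 : Matrix (Fin 3) (Fin 3) R) ⊗ₖ spinRaise R
    + (spinRaise R ^ 2) ⊗ₖ spinLower R + spinLower R ⊗ₖ (spinRaise R ^ 2)

def sigmaMinus : Matrix (Fin 3 × Fin 3) (Fin 3 × Fin 3) R := (sigmaPlus R)ᵀ

def sigmaZ : Matrix (Fin 3 × Fin 3) (Fin 3 × Fin 3) R :=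
  sigmaPlus R * sigmaMinus R - sigmaMinus R * sigmaPlus R

def lambdaPlus : Matrix (Fin 3 × Fin 3) (Fin 3 × Fin 3) R :=
  sigmaZ R * sigmaPlus R - sigmaPlus R * sigmaZ R

def lambdaMinus : Matrix (Fin 3 × Fin 3) (Fin 3 × Fin 3) R :=
  -(sigmaZ R * sigmaMinus R - sigmaMinus R * sigmaZ R)

def lambdaZ : Matrix (Fin 3 × Fin 3) (Fin 3 × Fin 3) R :=
  lambdaPlus R * lambdaMinus R - lambdaMinus R * lambdaPlus R

def totalSpinZ : Matrix (Fin 3 × Fin 3) (Fin 3 × Fin 3) R :=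
  spinZ R ⊗ₖ (1 : Matrix (Fin 3) (Fin 3) R) + (1 : Matrix (Fin 3) (Fin 3) R) ⊗ₖ spinZ R

/-- `24 p`, which unlike `p` has integer entries. -/
def center : Matrix (Fin 3 × Fin 3) (Fin 3 × Fin 3) R :=
  (24 : ℕ) • totalSpinZ R - (28 : ℕ) • sigmaZ R + lambdaZ R

theorem sigmaZ_transpose : (sigmaZ R)ᵀ = sigmaZ R :=
  (sigmaPlus R).transpose_commutator_transpose_self

theorem lambdaPlus_transpose : (lambdaPlus R)ᵀ = lambdaMinus R := by
  simp [lambdaPlus, lambdaMinus, sigmaMinus, transpose_sub, transpose_mul, sigmaZ_transpose]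

theorem lambdaZ_transpose : (lambdaZ R)ᵀ = lambdaZ R := by
  rw [lambdaZ, ← lambdaPlus_transpose]
  exact (lambdaPlus R).transpose_commutator_transpose_self

theorem totalSpinZ_transpose : (totalSpinZ R)ᵀ = totalSpinZ R := by
  have hz : (spinZ R)ᵀ = spinZ R := by
    ext i j; fin_cases i <;> fin_cases j <;> rfl
  simp only [totalSpinZ, transpose_add, ← kroneckerMap_transpose, transpose_one, hz]

theorem center_transpose : (center R)ᵀ = center R := by
  simp only [center, transpose_add, transpose_sub, transpose_smul, totalSpinZ_transpose,
    sigmaZ_transpose, lambdaZ_transpose]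

section Map

variable {R} {S : Type*} [CommRing S] (φ : R →+* S)

theorem map_spinRaise : (spinRaise R).map φ = spinRaise S := by
  ext i j; fin_cases i <;> fin_cases j <;> simp [spinRaise]

theorem map_spinLower : (spinLower R).map φ = spinLower S := by
  ext i j; fin_cases i <;> fin_cases j <;> simp [spinLower]

theorem map_spinZ : (spinZ R).map φ = spinZ S := by
  ext i j; fin_cases i <;> fin_cases j <;> simp [spinZ]

theorem map_sigmaPlus : (sigmaPlus R).map φ = sigmaPlus S := by
  simp only [sigmaPlus, Matrix.map_add, Matrix.map_mul, Matrix.map_one, pow_two,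
    Matrix.map_kronecker φ, map_spinRaise, map_spinLower, map_add, map_zero, map_one, implies_true]

theorem map_center : (center R).map φ = center S := by
  simp only [center, lambdaZ, lambdaPlus, lambdaMinus, sigmaZ, sigmaMinus, totalSpinZ,
    Matrix.map_add, Matrix.map_sub, Matrix.map_neg, Matrix.map_mul, Matrix.map_smul, Matrix.map_one,
    transpose_map, Matrix.map_kronecker φ, map_sigmaPlus, map_spinZ, map_add, map_sub, map_neg,
    map_nsmul, map_zero, map_one, implies_true]

end Map

theorem center_commute_sigmaPlus_int : Commute (center ℤ) (sigmaPlus ℤ) := by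
  unfold Commute SemiconjBy; decide

theorem center_commute_sigmaPlus : Commute (center R) (sigmaPlus R) := by
  rw [← map_center (Int.castRingHom R), ← map_sigmaPlus (Int.castRingHom R)]
  exact center_commute_sigmaPlus_int.map (Int.castRingHom R).mapMatrix

theorem center_commute_sigmaMinus : Commute (center R) (sigmaMinus R) := by
  rw [← center_transpose]
  exact (center_commute_sigmaPlus R).transpose

end TwoSite

theorem central_element_commutes : pC * Sig = Sig * pC ∧ pC * SigM = SigM * pC := by
  have hp : pC = (24 : ℂ)⁻¹ • TwoSite.center ℂ := by
    rw [TwoSite.center, smul_add, smul_sub, ← Nat.cast_smul_eq_nsmul ℂ, ← Nat.cast_smul_eq_nsmul ℂ,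
      smul_smul, smul_smul]
    norm_num [pC]
    rfl
  rw [hp]
  exact ⟨((TwoSite.center_commute_sigmaPlus ℂ).smul_left _).eq,
    ((TwoSite.center_commute_sigmaMinus ℂ).smul_left _).eq⟩
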